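/- arXiv:2210.15820 — 2 statements merged into one kernel-verified Lean document; each statement's English description precedes it below -/
import Mathlib

section
/- For any density matrix ρ on ℂ^d and any pure-state decomposition ρ = Σ_j p_j |ψ_j⟩⟨ψ_j| (with p_j ≥ 0, Σ_j p_j = 1, ψ_j unit vectors), one has Σ_j p_j |⟨ψ_j*, ψ_j⟩| ≤ √F(ρ, ρᵀ), where √F(ρ,σ) = Tr√(√ρ σ √ρ) is the root fidelity and ρᵀ the transpose. Equivalently, Σ_j p_j (1 − |⟨ψ_j*,ψ_j⟩|)/2 ≥ (1 − √F(ρ,ρᵀ))/2. -/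
open Matrix
open scoped ComplexOrder

/-- Singular values of a complex square matrix: square roots of eigenvalues of `Aᴴ * A`. -/
noncomputable def singularValues {n : Type*} [Fintype n] [DecidableEq n]
    (A : Matrix n n ℂ) : n → ℝ :=
  fun i => Real.sqrt ((Matrix.isHermitian_conjTranspose_mul_self A).eigenvalues i)

/-- Trace norm: sum of singular values. -/
noncomputable def traceNorm {n : Type*} [Fintype n] [DecidableEq n]
    (A : Matrix n n ℂ) : ℝ := ∑ i, singularValues A i

/-- Positive-semidefinite square root (zero for non-PSD input). -/
noncomputable def msqrt {n : Type*} [Fintype n] [DecidableEq n]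
    (A : Matrix n n ℂ) : Matrix n n ℂ :=
  open scoped Classical in
  if h : A.PosSemidef then
    (h.1.eigenvectorUnitary : Matrix n n ℂ) * diagonal ((↑) ∘ Real.sqrt ∘ h.1.eigenvalues) *
      (star h.1.eigenvectorUnitary : Matrix n n ℂ) else 0

/-- Root fidelity √F(ρ,σ) = Tr √(√ρ σ √ρ). -/
noncomputable def rootFid {n : Type*} [Fintype n] [DecidableEq n]
    (ρ σ : Matrix n n ℂ) : ℝ := ((msqrt (msqrt ρ * σ * msqrt ρ)).trace).re

/-- A density matrix: positive semidefinite with unit trace. -/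
def IsDensity {n : Type*} [Fintype n] [DecidableEq n] (ρ : Matrix n n ℂ) : Prop :=
  ρ.PosSemidef ∧ ρ.trace = 1

/-- Partial transpose on the second tensor factor. -/
noncomputable def ptB {dA dB : ℕ} (X : Matrix (Fin dA × Fin dB) (Fin dA × Fin dB) ℂ) :
    Matrix (Fin dA × Fin dB) (Fin dA × Fin dB) ℂ :=
  Matrix.of fun p q => X (p.1, q.2) (q.1, p.2)

/-- Hermitian inner product ⟨x,y⟩ = ∑ conj(xᵢ) yᵢ. -/
noncomputable def hinner {ι : Type*} [Fintype ι] (x y : ι → ℂ) : ℂ := ∑ i, star (x i) * y i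

/-- Entrywise complex conjugate of a vector. -/
noncomputable def cconj {ι : Type*} (x : ι → ℂ) : ι → ℂ := fun i => star (x i)

/-!
Write `ρ = A Aᴴ`, where `A` has columns `√p_j ψ_j`, and `ρᵀ = B Bᴴ`, where `B` has columns
`v_j √p_j ψ_j*` with unimodular phases `v_j` chosen so that `(Aᴴ B)_jj = p_j |⟨ψ_j*, ψ_j⟩|`. The
left-hand side is then `Re tr (Aᴴ B)`, which is at most the trace norm `‖Aᴴ B‖₁`. As `A Aᴴ = √ρ √ρ`,
`(Aᴴ B)ᴴ (Aᴴ B) = (√ρ B)ᴴ (√ρ B)`, and `(√ρ B)ᴴ (√ρ B)` has the same nonzero eigenvalues as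
`(√ρ B) (√ρ B)ᴴ = √ρ ρᵀ √ρ`, so `‖Aᴴ B‖₁ = tr √(√ρ ρᵀ √ρ) = √F(ρ, ρᵀ)`.
-/

section MatrixSqrt

open scoped MatrixOrder

variable {n : Type*} [Fintype n] [DecidableEq n] {A : Matrix n n ℂ}

theorem msqrt_eq_sqrt (hA : A.PosSemidef) : msqrt A = CFC.sqrt A := by
  rw [CFC.sqrt_eq_real_sqrt A (nonneg_iff_posSemidef.mpr hA), cfcₙ_eq_cfc, hA.1.cfc_eq, msqrt,
    dif_pos hA, IsHermitian.cfc, Unitary.conjStarAlgAut_apply]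
  rfl

theorem msqrt_mul_self (hA : A.PosSemidef) : msqrt A * msqrt A = A := by
  rw [msqrt_eq_sqrt hA, CFC.sqrt_mul_sqrt_self A (nonneg_iff_posSemidef.mpr hA)]

theorem posSemidef_msqrt (hA : A.PosSemidef) : (msqrt A).PosSemidef := by
  rw [msqrt_eq_sqrt hA, ← nonneg_iff_posSemidef]
  exact CFC.sqrt_nonneg A

theorem trace_msqrt (hA : A.PosSemidef) :
    (msqrt A).trace = ∑ i, (Real.sqrt (hA.1.eigenvalues i) : ℂ) := by
  rw [msqrt, dif_pos hA, trace_mul_cycle, Unitary.coe_star_mul_self, one_mul, trace_diagonal]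
  rfl

end MatrixSqrt

open Polynomial in
theorem Matrix.IsHermitian.sum_comp_eigenvalues {n : Type*} [Fintype n] [DecidableEq n]
    {A : Matrix n n ℂ} (hA : A.IsHermitian) (f : ℝ → ℝ) :
    ∑ i, f (hA.eigenvalues i) = (A.charpoly.roots.map (f ∘ Complex.re)).sum := by
  simp [hA.roots_charpoly_eq_eigenvalues]

open Polynomial in
/-- `CᴴC` and `CCᴴ` have the same characteristic polynomial up to a power of `X`
(`Matrix.charpoly_mul_comm'`), so their eigenvalues agree up to zeros. -/
theorem sum_comp_eigenvalues_conjTranspose_mul_self {m n : Type*} [Fintype m] [Fintype n]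
    [DecidableEq m] [DecidableEq n] (C : Matrix m n ℂ) {f : ℝ → ℝ} (hf : f 0 = 0) :
    ∑ i, f ((isHermitian_conjTranspose_mul_self C).eigenvalues i) =
      ∑ i, f ((isHermitian_mul_conjTranspose_self C).eigenvalues i) := by
  have h := congrArg (fun P : ℂ[X] => (P.roots.map (f ∘ Complex.re)).sum)
    (charpoly_mul_comm' Cᴴ C)
  simp only [roots_mul (mul_ne_zero (pow_ne_zero _ X_ne_zero) (charpoly_monic _).ne_zero),
    roots_X_pow, Multiset.map_add, Multiset.map_nsmul, Multiset.sum_add, Multiset.sum_nsmul,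
    Multiset.map_singleton, Multiset.sum_singleton, Function.comp_apply, Complex.zero_re, hf,
    smul_zero, zero_add] at h
  rw [IsHermitian.sum_comp_eigenvalues, IsHermitian.sum_comp_eigenvalues]
  exact h

theorem trace_msqrt_conjTranspose_mul_self {m n : Type*} [Fintype m] [Fintype n]
    [DecidableEq m] [DecidableEq n] (C : Matrix m n ℂ) :
    (msqrt (Cᴴ * C)).trace = (msqrt (C * Cᴴ)).trace := by
  rw [trace_msqrt (posSemidef_conjTranspose_mul_self C),
    trace_msqrt (posSemidef_self_mul_conjTranspose C), ← Complex.ofReal_sum, ← Complex.ofReal_sum,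
    sum_comp_eigenvalues_conjTranspose_mul_self C Real.sqrt_zero]

section TraceNorm

open scoped InnerProductSpace

variable {n : Type*} [Fintype n] [DecidableEq n]

theorem Matrix.trace_eq_sum_inner (X : Matrix n n ℂ)
    (b : OrthonormalBasis n ℂ (EuclideanSpace ℂ n)) :
    X.trace = ∑ k, ⟪b k, toLpLin 2 2 X (b k)⟫_ℂ := by
  rw [← LinearMap.trace_eq_sum_inner, toLpLin_eq_toLin, trace_toLin_eq]

theorem Matrix.norm_toLpLin_eigenvectorBasis_sq (X : Matrix n n ℂ) (k : n) :
    ‖toLpLin 2 2 X ((isHermitian_conjTranspose_mul_self X).eigenvectorBasis k)‖ ^ 2 =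
      (isHermitian_conjTranspose_mul_self X).eigenvalues k := by
  rw [IsHermitian.eigenvalues_eq, ← inner_self_eq_norm_sq (𝕜 := ℂ), toLpLin_apply,
    EuclideanSpace.inner_eq_star_dotProduct]
  congr 1
  rw [star_mulVec, dotProduct_comm, ← dotProduct_mulVec, mulVec_mulVec, dotProduct_comm]

theorem re_trace_le_traceNorm (X : Matrix n n ℂ) : X.trace.re ≤ traceNorm X := by
  set hH := isHermitian_conjTranspose_mul_self X
  rw [X.trace_eq_sum_inner hH.eigenvectorBasis, Complex.re_sum]
  refine Finset.sum_le_sum fun k _ => ?_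
  calc _ ≤ ‖_‖ := Complex.re_le_norm _
    _ ≤ ‖hH.eigenvectorBasis k‖ * ‖toLpLin 2 2 X (hH.eigenvectorBasis k)‖ :=
      norm_inner_le_norm _ _
    _ = singularValues X k := by
      rw [hH.eigenvectorBasis.orthonormal.1 k, one_mul, singularValues,
        ← X.norm_toLpLin_eigenvectorBasis_sq, Real.sqrt_sq (norm_nonneg _)]

theorem traceNorm_eq_trace_msqrt (X : Matrix n n ℂ) :
    (traceNorm X : ℂ) = (msqrt (Xᴴ * X)).trace := by
  rw [trace_msqrt (posSemidef_conjTranspose_mul_self X), traceNorm, Complex.ofReal_sum]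
  rfl

end TraceNorm

theorem re_trace_conjTranspose_mul_le_rootFid {d m : Type*} [Fintype d] [Fintype m]
    [DecidableEq d] [DecidableEq m] (A B : Matrix d m ℂ) :
    (Aᴴ * B).trace.re ≤ rootFid (A * Aᴴ) (B * Bᴴ) := by
  set R := msqrt (A * Aᴴ)
  have hR : Rᴴ = R := (posSemidef_msqrt (posSemidef_self_mul_conjTranspose A)).1
  have hRR : R * R = A * Aᴴ := msqrt_mul_self (posSemidef_self_mul_conjTranspose A)
  have hX : (Aᴴ * B)ᴴ * (Aᴴ * B) = (R * B)ᴴ * (R * B) := by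
    simp only [conjTranspose_mul, conjTranspose_conjTranspose, hR, Matrix.mul_assoc]
    rw [← Matrix.mul_assoc A, ← hRR, Matrix.mul_assoc]
  have hY : R * B * (R * B)ᴴ = R * (B * Bᴴ) * R := by
    simp only [conjTranspose_mul, hR, Matrix.mul_assoc]
  calc (Aᴴ * B).trace.re ≤ traceNorm (Aᴴ * B) := re_trace_le_traceNorm _
    _ = (msqrt ((R * B)ᴴ * (R * B))).trace.re := by
      rw [← hX, ← traceNorm_eq_trace_msqrt, Complex.ofReal_re]
    _ = rootFid (A * Aᴴ) (B * Bᴴ) := by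
      rw [trace_msqrt_conjTranspose_mul_self, hY]
      rfl

theorem cconj_cconj {ι : Type*} (x : ι → ℂ) : cconj (cconj x) = x :=
  funext fun i => star_star (x i)

theorem star_hinner {ι : Type*} [Fintype ι] (x y : ι → ℂ) : star (hinner x y) = hinner y x := by
  simp only [hinner, star_sum, star_mul', star_star, mul_comm]

section Columns

variable {d m : Type*} [Fintype m]

theorem mul_conjTranspose_of_columns (u : m → ℂ) (φ : m → d → ℂ) :
    of (fun i j => u j * φ j i) * (of fun i j => u j * φ j i)ᴴ =
      ∑ j, ((‖u j‖ ^ 2 : ℝ) : ℂ) • vecMulVec (φ j) (cconj (φ j)) := by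
  ext i k
  simp only [mul_apply, conjTranspose_apply, of_apply, Matrix.sum_apply, Matrix.smul_apply,
    vecMulVec_apply, cconj, smul_eq_mul, star_mul', Complex.star_def]
  refine Finset.sum_congr rfl fun j _ => ?_
  rw [Complex.ofReal_pow, ← Complex.mul_conj']
  ring

theorem trace_conjTranspose_mul_of_columns [Fintype d] (u w : m → ℂ) (φ χ : m → d → ℂ) :
    ((of fun i j => u j * φ j i)ᴴ * of fun i j => w j * χ j i).trace =
      ∑ j, star (u j) * w j * hinner (φ j) (χ j) := by
  simp only [trace, diag_apply, mul_apply, conjTranspose_apply, of_apply, hinner, Finset.mul_sum,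
    star_mul']
  exact Finset.sum_congr rfl fun j _ => Finset.sum_congr rfl fun i _ => by ring

end Columns

theorem decomposition_rootfid_bound_general {d n : ℕ}
    (ρ : Matrix (Fin d) (Fin d) ℂ)
    (p : Fin n → ℝ) (ψ : Fin n → Fin d → ℂ)
    (hp : ∀ j, 0 ≤ p j)
    (hdec : ρ = ∑ j, (p j : ℂ) • Matrix.vecMulVec (ψ j) (cconj (ψ j))) :
    ∑ j, p j * ‖hinner (cconj (ψ j)) (ψ j)‖ ≤ rootFid ρ ρᵀ := by
  choose v hv_norm hv using fun j =>
    Complex.exists_norm_eq_mul_self (star (hinner (cconj (ψ j)) (ψ j)))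
  set s : Fin n → ℂ := fun j => (Real.sqrt (p j) : ℂ)
  have hs : ∀ j, star (s j) * s j = p j := fun j => by
    rw [Complex.star_def, Complex.conj_ofReal, ← Complex.ofReal_mul, Real.mul_self_sqrt (hp j)]
  have hs_norm : ∀ j, ‖s j‖ ^ 2 = p j := fun j => by
    rw [Complex.norm_real, Real.norm_eq_abs, sq_abs, Real.sq_sqrt (hp j)]
  set A := of fun i j => s j * ψ j i
  set B := of fun i j => (v j * s j) * cconj (ψ j) i
  have hA : A * Aᴴ = ρ := by
    rw [mul_conjTranspose_of_columns, hdec]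
    simp_rw [hs_norm]
  have hB : B * Bᴴ = ρᵀ := by
    rw [mul_conjTranspose_of_columns, hdec, transpose_sum]
    refine Finset.sum_congr rfl fun j _ => ?_
    rw [norm_mul, hv_norm, one_mul, hs_norm, transpose_smul, transpose_vecMulVec,
      cconj_cconj]
  have htrace : (Aᴴ * B).trace.re = ∑ j, p j * ‖hinner (cconj (ψ j)) (ψ j)‖ := by
    rw [trace_conjTranspose_mul_of_columns, Complex.re_sum]
    refine Finset.sum_congr rfl fun j _ => ?_
    rw [← star_hinner, show star (s j) * (v j * s j) * star (hinner (cconj (ψ j)) (ψ j)) =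
      (star (s j) * s j) * (v j * star (hinner (cconj (ψ j)) (ψ j))) by ring, hs, ← hv,
      norm_star, ← Complex.ofReal_mul, Complex.ofReal_re]
  simpa only [htrace, hA, hB] using re_trace_conjTranspose_mul_le_rootFid A B

/-- for any pure-state decomposition of ρ,
Σ_j p_j |⟨ψ_j*,ψ_j⟩| ≤ √F(ρ,ρᵀ). -/
theorem decomposition_rootfid_bound {d n : ℕ}
    (ρ : Matrix (Fin d) (Fin d) ℂ) (hρ : IsDensity ρ)
    (p : Fin n → ℝ) (ψ : Fin n → Fin d → ℂ)
    (hp : ∀ j, 0 ≤ p j) (hp1 : ∑ j, p j = 1)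
    (hunit : ∀ j, hinner (ψ j) (ψ j) = 1)
    (hdec : ρ = ∑ j, (p j : ℂ) • Matrix.vecMulVec (ψ j) (cconj (ψ j))) :
    ∑ j, p j * ‖hinner (cconj (ψ j)) (ψ j)‖ ≤ rootFid ρ ρᵀ :=
  decomposition_rootfid_bound_general ρ p ψ hp hdec
end

section
/- Suppose a probabilistic pure-to-pure conversion law P(ψ → φ) = min{ I_g(ψ)/I_g(φ), 1 } holds, where I_g(ψ) = (1 − |⟨ψ*,ψ⟩|)/2. For a density matrix ρ with optimal decomposition ρ = Σ_j p'_j |ψ'_j⟩⟨ψ'_j| achieving I_g(ρ) = Σ_j p'_j I_g(ψ'_j), the purification |ρ⟩ = Σ_j √(p'_j) |ψ'_j⟩ ⊗ |j⟩ (with {|j⟩} the real standard basis of the ancilla) satisfies I_g(|ρ⟩) = I_g(ρ). -/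
open Matrix
open scoped ComplexOrder

/-!
Writing `Φ = Σ_j √p_j ψ_j ⊗ e_j` with a real ancilla basis, the ancilla drops out of the
bilinear pairing: `⟨Φ*, Φ⟩ = Σ_j p_j ⟨ψ_j*, ψ_j⟩`. For an optimal decomposition every
`⟨ψ_j*, ψ_j⟩` is a nonnegative real, so the absolute value of this sum is the sum of the absolute
values, and `I_g(Φ)` equals the average `Σ_j p_j I_g(ψ_j)`, which is `I_g(ρ)` by optimality.
-/

lemma hinner_cconj_left {ι : Type*} [Fintype ι] (x y : ι → ℂ) :
    hinner (cconj x) y = ∑ i, x i * y i := by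
  simp only [hinner, cconj, star_star]

lemma hinner_cconj_self_prod {ι κ : Type*} [Fintype ι] [Fintype κ]
    (a : κ → ℂ) (ψ : κ → ι → ℂ) :
    hinner (cconj fun x : ι × κ => a x.2 * ψ x.2 x.1) (fun x => a x.2 * ψ x.2 x.1)
      = ∑ j, a j ^ 2 * hinner (cconj (ψ j)) (ψ j) := by
  simp only [hinner_cconj_left, Fintype.sum_prod_type, Finset.mul_sum]
  rw [Finset.sum_comm]
  refine Finset.sum_congr rfl fun j _ => Finset.sum_congr rfl fun i _ => ?_
  ring

lemma Complex.norm_sum_of_nonneg {ι : Type*} (s : Finset ι) {z : ι → ℂ}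
    (hz : ∀ i ∈ s, 0 ≤ z i) : ‖∑ i ∈ s, z i‖ = ∑ i ∈ s, ‖z i‖ := by
  apply Complex.ofReal_injective
  push_cast
  rw [Complex.norm_of_nonneg' (Finset.sum_nonneg hz)]
  exact Finset.sum_congr rfl fun i hi => (Complex.norm_of_nonneg' (hz i hi)).symm

lemma sum_mul_half_one_sub {κ : Type*} [Fintype κ] {p : κ → ℝ} (hp1 : ∑ j, p j = 1)
    (c : κ → ℝ) : ∑ j, p j * ((1 - c j) / 2) = (1 - ∑ j, p j * c j) / 2 := by
  simp only [mul_div_assoc', mul_sub, mul_one, ← Finset.sum_div, Finset.sum_sub_distrib, hp1]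

theorem purification_imaginarity_general {d m : ℕ}
    (p : Fin m → ℝ) (ψ : Fin m → Fin d → ℂ)
    (hp : ∀ j, 0 ≤ p j) (hp1 : ∑ j, p j = 1)
    (ρ : Matrix (Fin d) (Fin d) ℂ)
    (hopt : ∑ j, p j * ((1 - ‖hinner (cconj (ψ j)) (ψ j)‖) / 2)
      = (1 - rootFid ρ ρᵀ) / 2)
    (hconj : ∀ j, 0 ≤ (hinner (cconj (ψ j)) (ψ j)).re ∧
      (hinner (cconj (ψ j)) (ψ j)).im = 0)
    (Φ : Fin d × Fin m → ℂ)
    (hΦ : Φ = fun x => (Real.sqrt (p x.2) : ℂ) * ψ x.2 x.1) :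
    (1 - ‖hinner (cconj Φ) Φ‖) / 2 = (1 - rootFid ρ ρᵀ) / 2 := by
  have hweight : ∀ j, (Real.sqrt (p j) : ℂ) ^ 2 = p j := fun j => by
    rw [← Complex.ofReal_pow, Real.sq_sqrt (hp j)]
  have hterm : ∀ j, 0 ≤ (p j : ℂ) * hinner (cconj (ψ j)) (ψ j) := fun j =>
    mul_nonneg (Complex.zero_le_real.2 (hp j))
      (Complex.nonneg_iff.2 ⟨(hconj j).1, (hconj j).2.symm⟩)
  rw [hΦ, hinner_cconj_self_prod (fun j => (Real.sqrt (p j) : ℂ)) ψ, ← hopt, sum_mul_half_one_sub hp1]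
  simp only [hweight, Complex.norm_sum_of_nonneg _ fun j _ => hterm j, norm_mul,
    Complex.norm_real, Real.norm_of_nonneg (hp _)]

/-- for an optimal (conjugate-nonnegative) decomposition of ρ, the standard
purification |ρ⟩ = Σ_j √p'_j |ψ'_j⟩ ⊗ |j⟩ has the same geometric imaginarity as ρ. -/
theorem purification_imaginarity {d m : ℕ}
    (p : Fin m → ℝ) (ψ : Fin m → Fin d → ℂ)
    (hp : ∀ j, 0 ≤ p j) (hp1 : ∑ j, p j = 1)
    (hunit : ∀ j, hinner (ψ j) (ψ j) = 1)
    (ρ : Matrix (Fin d) (Fin d) ℂ) (hρ : IsDensity ρ)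
    (hdec : ρ = ∑ j, (p j : ℂ) • Matrix.vecMulVec (ψ j) (cconj (ψ j)))
    (hopt : ∑ j, p j * ((1 - ‖hinner (cconj (ψ j)) (ψ j)‖) / 2)
      = (1 - rootFid ρ ρᵀ) / 2)
    (hconj : ∀ j, 0 ≤ (hinner (cconj (ψ j)) (ψ j)).re ∧
      (hinner (cconj (ψ j)) (ψ j)).im = 0)
    (Φ : Fin d × Fin m → ℂ)
    (hΦ : Φ = fun x => (Real.sqrt (p x.2) : ℂ) * ψ x.2 x.1) :
    (1 - ‖hinner (cconj Φ) Φ‖) / 2 = (1 - rootFid ρ ρᵀ) / 2 :=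
  purification_imaginarity_general p ψ hp hp1 ρ hopt hconj Φ hΦ
end
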